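/- arXiv:2505.17885 — 5 statements merged into one kernel-verified Lean document; each statement's English description precedes it below -/
import Mathlib

section
/- Let (X, I) be a matroid where each ground set element x has a nonnegative weight w_x. If A and A' are two maximum-weight independent sets, then the multisets of nonzero element weights of A and A' are identical. -/
structure FinMatroid (X : Type*) [DecidableEq X] [Fintype X] where
  Indep : Finset X → Prop
  nonempty : ∃ A, Indep A
  downward : ∀ ⦃A A' : Finset X⦄, Indep A' → A ⊆ A' → Indep A
  exchange : ∀ ⦃A A' : Finset X⦄, Indep A → Indep A' → A.card < A'.card →
    ∃ x ∈ A' \ A, Indep (insert x A)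

open scoped Classical

private lemma finmatroid_grow {X : Type*} [DecidableEq X] [Fintype X] (M : FinMatroid X) :
    ∀ n (B A : Finset X), A.card - B.card = n → M.Indep B → M.Indep A → B.card ≤ A.card →
    ∃ C, M.Indep C ∧ B ⊆ C ∧ C \ B ⊆ A ∧ C.card = A.card := by
  intro n
  induction n with
  | zero =>
    intro B A hn hB hA hle
    refine ⟨B, hB, subset_rfl, ?_, ?_⟩
    · simp
    · omega
  | succ n ih =>
    intro B A hn hB hA hle
    have hlt : B.card < A.card := by omega
    obtain ⟨x, hx, hind⟩ := M.exchange hB hA hlt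
    have hxA : x ∈ A := (Finset.mem_sdiff.mp hx).1
    have hxB : x ∉ B := (Finset.mem_sdiff.mp hx).2
    have hcard : (insert x B).card = B.card + 1 := Finset.card_insert_of_notMem hxB
    obtain ⟨C, hC, hBC, hCA, hCcard⟩ := ih (insert x B) A (by omega) hind hA (by omega)
    refine ⟨C, hC, (Finset.subset_insert x B).trans hBC, ?_, hCcard⟩
    intro y hy
    rw [Finset.mem_sdiff] at hy
    by_cases hyx : y = x
    · exact hyx ▸ hxA
    · exact hCA (Finset.mem_sdiff.mpr ⟨hy.1, by simp [hyx, hy.2]⟩)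

private lemma finmatroid_count_le {X : Type*} [DecidableEq X] [Fintype X]
    (M : FinMatroid X) (w : X → ℝ) (hw : ∀ x, 0 ≤ w x)
    (A A' : Finset X) (hA : M.Indep A) (hA' : M.Indep A')
    (hmaxA : ∀ B, M.Indep B → ∑ x ∈ B, w x ≤ ∑ x ∈ A, w x)
    (t : ℝ) (ht : 0 ≤ t) :
    (A'.filter fun x => t < w x).card ≤ (A.filter fun x => t < w x).card := by
  by_contra h
  push_neg at h
  set At := A.filter fun x => t < w x with hAt_def
  set At' := A'.filter fun x => t < w x with hAt'_def
  have hAtA : At ⊆ A := Finset.filter_subset _ _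
  have hAtI : M.Indep At := M.downward hA hAtA
  have hAt'I : M.Indep At' := M.downward hA' (Finset.filter_subset _ _)
  obtain ⟨x, hx, hind⟩ := M.exchange hAtI hAt'I h
  have hx1 : x ∈ At' := (Finset.mem_sdiff.mp hx).1
  have hx2 : x ∉ At := (Finset.mem_sdiff.mp hx).2
  have hwx : t < w x := (Finset.mem_filter.mp hx1).2
  have hxA : x ∉ A := fun hxa => hx2 (Finset.mem_filter.mpr ⟨hxa, hwx⟩)
  by_cases hcase : At = A
  · -- insert x A is independent and heavier
    have : ∑ y ∈ insert x A, w y = w x + ∑ y ∈ A, w y :=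
      Finset.sum_insert hxA
    have hle := hmaxA (insert x A) (hcase ▸ hind)
    rw [this] at hle
    linarith
  · have hxAt : x ∉ At := hx2
    have hcardlt : At.card < A.card :=
      lt_of_le_of_ne (Finset.card_le_card hAtA) (fun he => hcase (Finset.eq_of_subset_of_card_le hAtA he.ge))
    have hcardB : (insert x At).card = At.card + 1 := Finset.card_insert_of_notMem hxAt
    obtain ⟨C, hC, hBC, hCBA, hCcA⟩ := finmatroid_grow M (A.card - (insert x At).card)
      (insert x At) A rfl hind hA (by omega)
    set D := C \ insert x At with hD_def
    have hDA : D ⊆ A \ At := by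
      intro y hy
      rw [Finset.mem_sdiff] at hy ⊢
      exact ⟨hCBA (Finset.mem_sdiff.mpr hy), fun hyA => hy.2 (Finset.mem_insert_of_mem hyA)⟩
    have hDcard : D.card = C.card - (insert x At).card := Finset.card_sdiff_of_subset hBC
    have hsumC : ∑ y ∈ C, w y = (∑ y ∈ D, w y) + (w x + ∑ y ∈ At, w y) := by
      rw [← Finset.sum_sdiff hBC, Finset.sum_insert hxAt]
    have hsumA : ∑ y ∈ A, w y = (∑ y ∈ A \ At, w y) + ∑ y ∈ At, w y :=
      (Finset.sum_sdiff hAtA).symm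
    have hsplit : ∑ y ∈ A \ At, w y = (∑ y ∈ (A \ At) \ D, w y) + ∑ y ∈ D, w y :=
      (Finset.sum_sdiff hDA).symm
    have hcard1 : ((A \ At) \ D).card = 1 := by
      rw [Finset.card_sdiff_of_subset hDA, hDcard, Finset.card_sdiff_of_subset hAtA, hCcA, hcardB]
      omega
    have hrem : ∑ y ∈ (A \ At) \ D, w y ≤ t := by
      obtain ⟨z, hz⟩ := Finset.card_eq_one.mp hcard1
      rw [hz, Finset.sum_singleton]
      have hzmem : z ∈ (A \ At) \ D := by rw [hz]; exact Finset.mem_singleton_self z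
      have hzA : z ∈ A \ At := (Finset.mem_sdiff.mp hzmem).1
      rw [Finset.mem_sdiff] at hzA
      have : ¬ t < w z := fun hc => hzA.2 (Finset.mem_filter.mpr ⟨hzA.1, hc⟩)
      linarith
    have hle := hmaxA C hC
    rw [hsumC, hsumA, hsplit] at hle
    linarith

open scoped Classical in
/-- Any two maximum-weight independent sets of a matroid with nonnegative weights
have identical multisets of nonzero element weights. -/
theorem lexicographic_optimality {X : Type*} [DecidableEq X] [Fintype X]
    (M : FinMatroid X) (w : X → ℝ) (hw : ∀ x, 0 ≤ w x)
    (A A' : Finset X) (hA : M.Indep A) (hA' : M.Indep A')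
    (hmaxA : ∀ B, M.Indep B → ∑ x ∈ B, w x ≤ ∑ x ∈ A, w x)
    (hmaxA' : ∀ B, M.Indep B → ∑ x ∈ B, w x ≤ ∑ x ∈ A', w x) :
    ((A.filter fun x => w x ≠ 0).val.map w) =
      ((A'.filter fun x => w x ≠ 0).val.map w) := by
  have hcount : ∀ t : ℝ, 0 ≤ t →
      (A.filter fun x => t < w x).card = (A'.filter fun x => t < w x).card := by
    intro t ht
    exact le_antisymm
      (finmatroid_count_le M w hw A' A hA' hA hmaxA' t ht)
      (finmatroid_count_le M w hw A A' hA hA' hmaxA t ht)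
  -- per-value counts agree
  have hval : ∀ a : ℝ, a ≠ 0 → (A.filter fun x => a = w x).card = (A'.filter fun x => a = w x).card := by
    intro a ha0
    rcases ha0.lt_or_gt with hneg | hpos
    · have h1 : (A.filter fun x => a = w x) = ∅ := by
        apply Finset.filter_false_of_mem
        intro x _ hc
        exact absurd (hc ▸ hw x) (by linarith)
      have h2 : (A'.filter fun x => a = w x) = ∅ := by
        apply Finset.filter_false_of_mem
        intro x _ hc
        exact absurd (hc ▸ hw x) (by linarith)
      rw [h1, h2]
    · -- choose threshold t
      set s : Finset ℝ := insert (0:ℝ) (((A ∪ A').image w).filter fun v => v < a) with hs_def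
      have hsne : s.Nonempty := Finset.insert_nonempty _ _
      set t := s.max' hsne with ht_def
      have ht0 : (0:ℝ) ≤ t := Finset.le_max' s 0 (Finset.mem_insert_self _ _)
      have hta : t < a := by
        have := s.max'_mem hsne
        rw [Finset.mem_insert] at this
        rcases this with h | h
        · rw [← ht_def] at h; linarith
        · exact (Finset.mem_filter.mp h).2
      have hkey : ∀ x ∈ A ∪ A', (t < w x ↔ a ≤ w x) := by
        intro x hxmem
        constructor
        · intro htw
          by_contra hc
          push_neg at hc
          have : w x ∈ s := Finset.mem_insert_of_mem
            (Finset.mem_filter.mpr ⟨Finset.mem_image_of_mem w hxmem, hc⟩)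
          have := Finset.le_max' s _ this
          linarith
        · intro hc; linarith
      -- decompose
      have hdec : ∀ (B : Finset X), B ⊆ A ∪ A' →
          (B.filter fun x => t < w x).card =
            (B.filter fun x => a = w x).card + (B.filter fun x => a < w x).card := by
        intro B hB
        have he : (B.filter fun x => t < w x) = (B.filter fun x => a = w x) ∪ (B.filter fun x => a < w x) := by
          rw [← Finset.filter_or]
          apply Finset.filter_congr
          intro x hx
          have := hkey x (hB hx)
          constructor
          · intro h
            rcases eq_or_lt_of_le (this.mp h) with h' | h'
            · exact Or.inl h'
            · exact Or.inr h'
          · rintro (h | h)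
            · exact this.mpr h.le
            · exact this.mpr h.le
        rw [he, Finset.card_union_of_disjoint]
        rw [Finset.disjoint_filter]
        intro x _ h1 h2
        exact absurd h1 (ne_of_lt h2)
      have h1 := hdec A Finset.subset_union_left
      have h2 := hdec A' Finset.subset_union_right
      have h3 := hcount t ht0
      have h4 := hcount a hpos.le
      omega
  -- finish via multiset ext
  apply Multiset.ext.mpr
  intro a
  rw [Multiset.count_map, Multiset.count_map]
  by_cases ha : a = 0
  · subst ha
    have : ∀ (B : Finset X),
        Multiset.card (Multiset.filter (fun x => (0:ℝ) = w x) (B.filter fun x => w x ≠ 0).val) = 0 := by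
      intro B
      rw [Multiset.card_eq_zero, Multiset.filter_eq_nil]
      intro x hx hc
      exact (Finset.mem_filter.mp hx).2 hc.symm
    rw [this A, this A']
  · have key : ∀ (B : Finset X),
        Multiset.card (Multiset.filter (fun x => a = w x) (B.filter fun x => w x ≠ 0).val) =
          (B.filter fun x => a = w x).card := by
      intro B
      rw [Finset.filter_val, Multiset.filter_filter]
      have : Multiset.filter (fun x => a = w x ∧ w x ≠ 0) B.val =
          Multiset.filter (fun x => a = w x) B.val := by
        apply Multiset.filter_congr
        intro x _
        constructor
        · exact fun h => h.1
        · intro h; exact ⟨h, fun h0 => ha (h ▸ h0)⟩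
      rw [this]
      rfl
    rw [key A, key A', hval a ha]
end

section
/- Let (X, I) be a matroid with nonnegative weights w, and let A* be a maximum-weight independent set. For each element x, let t_x(w_{-x}) denote the minimum value z such that, replacing w_x by z while holding other weights fixed, x belongs to some maximum-weight independent set. Then for every independent set A, ∑_{x ∈ A*} w_x ≥ ∑_{x ∈ A} t_x(w_{-x}). -/
/-- The threshold `t_x(w_{-x})`: the infimum over nonnegative values `z` such that,
replacing `x`'s weight by `z` and holding the other weights fixed, `x` belongs to
some maximum-weight independent set. -/
noncomputable def threshold {X : Type*} [DecidableEq X] [Fintype X]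
    (M : FinMatroid X) (w : X → ℝ) (x : X) : ℝ :=
  sInf {z : ℝ | 0 ≤ z ∧ ∃ B, M.Indep B ∧ x ∈ B ∧
    ∀ C, M.Indep C →
      ∑ y ∈ C, Function.update w x z y ≤ ∑ y ∈ B, Function.update w x z y}

section Aux

variable {X : Type*} [DecidableEq X] [Fintype X]

lemma threshold_le_of_mem (M : FinMatroid X) (w : X → ℝ) {x : X} {z : ℝ} (hz : 0 ≤ z)
    (h : ∃ B, M.Indep B ∧ x ∈ B ∧ ∀ C, M.Indep C →
      ∑ y ∈ C, Function.update w x z y ≤ ∑ y ∈ B, Function.update w x z y) :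
    threshold M w x ≤ z :=
  csInf_le ⟨0, fun _ ha => ha.1⟩ ⟨hz, h⟩

lemma sum_update_of_notMem (w : X → ℝ) {x : X} (z : ℝ) {C : Finset X} (hx : x ∉ C) :
    ∑ y ∈ C, Function.update w x z y = ∑ y ∈ C, w y :=
  Finset.sum_congr rfl fun y hy => Function.update_of_ne (by rintro rfl; exact hx hy) _ _

lemma sum_update_of_mem (w : X → ℝ) {x : X} (z : ℝ) {C : Finset X} (hx : x ∈ C) :
    ∑ y ∈ C, Function.update w x z y = z + ∑ y ∈ C.erase x, w y := by
  rw [← Finset.add_sum_erase _ _ hx, Function.update_self,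
    sum_update_of_notMem w z (Finset.notMem_erase x C)]

/-- Any independent set of size at most `|B|` extends, using elements of `B`,
to an independent set of size exactly `|B|`. -/
lemma exists_extend (M : FinMatroid X) {B : Finset X} (hB : M.Indep B) :
    ∀ n (D : Finset X), M.Indep D → D.card ≤ B.card → B.card - D.card = n →
      ∃ E, M.Indep E ∧ D ⊆ E ∧ E ⊆ D ∪ B ∧ E.card = B.card := by
  intro n
  induction n with
  | zero =>
    intro D hD hle h0
    exact ⟨D, hD, subset_rfl, Finset.subset_union_left, by omega⟩
  | succ n ih =>
    intro D hD hle h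
    have hlt : D.card < B.card := by omega
    obtain ⟨y, hy, hins⟩ := M.exchange hD hB hlt
    rw [Finset.mem_sdiff] at hy
    have hc : (insert y D).card = D.card + 1 := Finset.card_insert_of_notMem hy.2
    obtain ⟨E, hE, hDE, hEsub, hEcard⟩ := ih (insert y D) hins (by omega) (by omega)
    refine ⟨E, hE, (Finset.subset_insert _ _).trans hDE, hEsub.trans ?_, hEcard⟩
    intro a ha
    rcases Finset.mem_union.mp ha with ha | ha
    · rcases Finset.mem_insert.mp ha with rfl | ha
      · exact Finset.mem_union_right _ hy.1
      · exact Finset.mem_union_left _ ha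
    · exact Finset.mem_union_right _ ha

/-- There is an independent set of maximum weight with at least `|A|` elements. -/
lemma exists_big (M : FinMatroid X) (w : X → ℝ) (hw : ∀ x, 0 ≤ w x)
    (Astar : Finset X) (hAstar : M.Indep Astar)
    (hmax : ∀ B, M.Indep B → ∑ x ∈ B, w x ≤ ∑ x ∈ Astar, w x)
    (A : Finset X) (hA : M.Indep A) :
    ∃ B, M.Indep B ∧ A.card ≤ B.card ∧ ∑ x ∈ B, w x = ∑ x ∈ Astar, w x := by
  suffices h : ∀ n (B : Finset X), M.Indep B → (∑ x ∈ B, w x = ∑ x ∈ Astar, w x) →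
      A.card - B.card = n →
      ∃ B', M.Indep B' ∧ A.card ≤ B'.card ∧ ∑ x ∈ B', w x = ∑ x ∈ Astar, w x by
    exact h (A.card - Astar.card) Astar hAstar rfl rfl
  intro n
  induction n with
  | zero =>
    intro B hB hsum h0
    rcases le_or_gt A.card B.card with hle | hlt
    · exact ⟨B, hB, hle, hsum⟩
    · omega
  | succ n ih =>
    intro B hB hsum h
    have hlt : B.card < A.card := by omega
    obtain ⟨y, hy, hins⟩ := M.exchange hB hA hlt
    rw [Finset.mem_sdiff] at hy
    have hc : (insert y B).card = B.card + 1 := Finset.card_insert_of_notMem hy.2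
    have hs : ∑ x ∈ insert y B, w x = w y + ∑ x ∈ B, w x := Finset.sum_insert hy.2
    have hy0 : w y = 0 := by
      have := hmax _ hins
      have := hw y
      rw [hs, hsum] at *
      linarith
    exact ih (insert y B) hins (by rw [hs, hy0, hsum]; ring) (by omega)

/-- A set of `k` heaviest elements of `B` exists. -/
lemma exists_top (w : X → ℝ) (B : Finset X) :
    ∀ k, k ≤ B.card → ∃ T ⊆ B, T.card = k ∧ ∀ u ∈ T, ∀ v ∈ B \ T, w v ≤ w u := by
  intro k
  induction k with
  | zero => exact fun _ => ⟨∅, Finset.empty_subset _, Finset.card_empty, by simp⟩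
  | succ k ih =>
    intro hk
    obtain ⟨T, hTB, hTc, hTmax⟩ := ih (by omega)
    have hne : (B \ T).Nonempty := by
      rw [← Finset.card_pos, Finset.card_sdiff_of_subset hTB]; omega
    obtain ⟨u₀, hu₀, hu₀max⟩ := Finset.exists_max_image (B \ T) w hne
    rw [Finset.mem_sdiff] at hu₀
    refine ⟨insert u₀ T, Finset.insert_subset hu₀.1 hTB,
      by rw [Finset.card_insert_of_notMem hu₀.2, hTc], ?_⟩
    intro u hu v hv
    have hv' : v ∈ B \ T := by
      rw [Finset.mem_sdiff] at hv ⊢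
      exact ⟨hv.1, fun h => hv.2 (Finset.mem_insert_of_mem h)⟩
    rcases Finset.mem_insert.mp hu with rfl | hu
    · exact hu₀max v hv'
    · exact hTmax u hu v hv'

/-- Key induction: thresholds over an independent set of size `k` are dominated by
the `k` heaviest weights of a maximum-weight independent set `B`. -/
lemma key_induction (M : FinMatroid X) (w : X → ℝ) (hw : ∀ x, 0 ≤ w x)
    (Astar : Finset X)
    (hmax : ∀ C, M.Indep C → ∑ x ∈ C, w x ≤ ∑ x ∈ Astar, w x)
    (B : Finset X) (hB : M.Indep B) (hwB : ∑ x ∈ B, w x = ∑ x ∈ Astar, w x) :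
    ∀ k (S : Finset X), M.Indep S → S.card = k → ∀ T, T ⊆ B → T.card = k →
      (∀ u ∈ T, ∀ v ∈ B \ T, w v ≤ w u) →
      ∑ x ∈ S, threshold M w x ≤ ∑ u ∈ T, w u := by
  classical
  intro k
  induction k with
  | zero =>
    intro S _ hS T _ hT _
    rw [Finset.card_eq_zero.mp hS, Finset.card_eq_zero.mp hT]
    simp
  | succ k ih =>
    intro S hSindep hScard T hTB hTcard hTtop
    -- pick the lightest element u₀ of T
    have hTne : T.Nonempty := by rw [← Finset.card_pos]; omega
    obtain ⟨u₀, hu₀T, hu₀min⟩ := Finset.exists_min_image T w hTne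
    set T' := T.erase u₀ with hT'
    have hT'B : T' ⊆ B := (Finset.erase_subset _ _).trans hTB
    have hT'card : T'.card = k := by
      rw [hT', Finset.card_erase_of_mem hu₀T, hTcard]; omega
    have hT'indep : M.Indep T' := M.downward hB hT'B
    -- exchange: get x ∈ S \ T' with insert x T' independent
    obtain ⟨x, hx, hxins⟩ := M.exchange hT'indep hSindep (by omega)
    rw [Finset.mem_sdiff] at hx
    -- extend insert x T' to an independent set E of size |B| inside B ∪ {x}
    have hDcard : (insert x T').card = k + 1 := by
      rw [Finset.card_insert_of_notMem hx.2, hT'card]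
    have hkB : k + 1 ≤ B.card := hTcard ▸ Finset.card_le_card hTB
    obtain ⟨E, hEindep, hDE, hEsub, hEcard⟩ :=
      exists_extend M hB (B.card - (insert x T').card) (insert x T') hxins (by omega) rfl
    have hxE : x ∈ E := hDE (Finset.mem_insert_self _ _)
    have hT'E : T' ⊆ E := (Finset.subset_insert _ _).trans hDE
    have hEx_sub : E.erase x ⊆ B := by
      intro a ha
      rw [Finset.mem_erase] at ha
      rcases Finset.mem_union.mp (hEsub ha.2) with h | h
      · rcases Finset.mem_insert.mp h with rfl | h
        · exact absurd rfl ha.1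
        · exact hT'B h
      · exact h
    have hEx_card : (E.erase x).card = B.card - 1 := by
      rw [Finset.card_erase_of_mem hxE, hEcard]
    -- the single element y of B missing from E.erase x
    have hsd_card : (B \ E.erase x).card = 1 := by
      rw [Finset.card_sdiff_of_subset hEx_sub, hEx_card]; omega
    obtain ⟨y, hy⟩ := Finset.card_eq_one.mp hsd_card
    have hyB : y ∈ B \ E.erase x := hy ▸ Finset.mem_singleton_self y
    rw [Finset.mem_sdiff] at hyB
    have hyT' : y ∉ T' := fun h => hyB.2 (Finset.mem_erase.mpr
      ⟨fun he => hx.2 (he ▸ h), hT'E h⟩)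
    have hwy : w y ≤ w u₀ := by
      by_cases hyu : y = u₀
      · rw [hyu]
      · have hyT : y ∉ T := fun hyT => hyT' (Finset.mem_erase.mpr ⟨hyu, hyT⟩)
        exact hTtop u₀ hu₀T y (Finset.mem_sdiff.mpr ⟨hyB.1, hyT⟩)
    -- weight identity: ∑_{E.erase x} w = ∑_B w - w y
    have hsum_split : ∑ a ∈ B \ E.erase x, w a + ∑ a ∈ E.erase x, w a = ∑ a ∈ B, w a :=
      Finset.sum_sdiff hEx_sub
    have hsd_sum : ∑ a ∈ B \ E.erase x, w a = w y := by rw [hy, Finset.sum_singleton]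
    have hE_sum : ∑ a ∈ E.erase x, w a = ∑ a ∈ B, w a - w y := by
      rw [← hsum_split, hsd_sum]; ring
    -- threshold bound: threshold M w x ≤ w u₀
    have hthr : threshold M w x ≤ w u₀ := by
      refine threshold_le_of_mem M w (hw u₀) ?_
      set F : Finset (Finset X) :=
        Finset.univ.filter (fun C => M.Indep C ∧ x ∈ C) with hF
      have hEF : E ∈ F := by
        rw [hF, Finset.mem_filter]
        exact ⟨Finset.mem_univ _, hEindep, hxE⟩
      obtain ⟨B₀, hB₀F, hB₀max⟩ :=
        Finset.exists_max_image F (fun C => ∑ a ∈ C.erase x, w a) ⟨E, hEF⟩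
      rw [hF, Finset.mem_filter] at hB₀F
      refine ⟨B₀, hB₀F.2.1, hB₀F.2.2, ?_⟩
      intro C hC
      rw [sum_update_of_mem w _ hB₀F.2.2]
      have hB₀big : ∑ a ∈ E.erase x, w a ≤ ∑ a ∈ B₀.erase x, w a := hB₀max E hEF
      by_cases hxC : x ∈ C
      · rw [sum_update_of_mem w _ hxC]
        have : ∑ a ∈ C.erase x, w a ≤ ∑ a ∈ B₀.erase x, w a := by
          refine hB₀max C ?_
          rw [hF, Finset.mem_filter]; exact ⟨Finset.mem_univ _, hC, hxC⟩
        linarith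
      · rw [sum_update_of_notMem w _ hxC]
        have h1 : ∑ a ∈ C, w a ≤ ∑ a ∈ Astar, w a := hmax C hC
        have h2 : ∑ a ∈ E.erase x, w a = ∑ a ∈ Astar, w a - w y := by
          rw [hE_sum, hwB]
        linarith
    -- apply induction hypothesis to S.erase x and T'
    have hSx_indep : M.Indep (S.erase x) := M.downward hSindep (Finset.erase_subset _ _)
    have hSx_card : (S.erase x).card = k := by
      rw [Finset.card_erase_of_mem hx.1, hScard]; omega
    have hT'top : ∀ u ∈ T', ∀ v ∈ B \ T', w v ≤ w u := by
      intro u hu v hv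
      rw [Finset.mem_sdiff] at hv
      by_cases hvT : v ∈ T
      · have : v = u₀ := by
          by_contra h
          exact hv.2 (Finset.mem_erase.mpr ⟨h, hvT⟩)
        rw [this]
        exact hu₀min u (Finset.mem_of_mem_erase hu)
      · exact hTtop u (Finset.mem_of_mem_erase hu) v (Finset.mem_sdiff.mpr ⟨hv.1, hvT⟩)
    have hIH := ih (S.erase x) hSx_indep hSx_card T' hT'B hT'card hT'top
    have hSsplit : ∑ a ∈ S, threshold M w a
        = threshold M w x + ∑ a ∈ S.erase x, threshold M w a :=
      (Finset.add_sum_erase _ _ hx.1).symm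
    have hTsplit : ∑ a ∈ T, w a = w u₀ + ∑ a ∈ T', w a :=
      (Finset.add_sum_erase _ _ hu₀T).symm
    rw [hSsplit, hTsplit]
    linarith

end Aux

/-- Revenue covering for matroids: if `A*` is a maximum-weight independent set, then
for every independent set `A`, `∑_{x ∈ A*} w_x ≥ ∑_{x ∈ A} t_x(w_{-x})`. -/
theorem revenue_covering {X : Type*} [DecidableEq X] [Fintype X]
    (M : FinMatroid X) (w : X → ℝ) (hw : ∀ x, 0 ≤ w x)
    (Astar : Finset X) (hAstar : M.Indep Astar)
    (hmax : ∀ B, M.Indep B → ∑ x ∈ B, w x ≤ ∑ x ∈ Astar, w x)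
    (A : Finset X) (hA : M.Indep A) :
    ∑ x ∈ A, threshold M w x ≤ ∑ x ∈ Astar, w x := by
  obtain ⟨B, hB, hcard, hwB⟩ := exists_big M w hw Astar hAstar hmax A hA
  obtain ⟨T, hTB, hTcard, hTtop⟩ := exists_top w B A.card hcard
  have h1 := key_induction M w hw Astar hmax B hB hwB A.card A hA rfl T hTB hTcard hTtop
  have h2 : ∑ u ∈ T, w u ≤ ∑ u ∈ B, w u :=
    Finset.sum_le_sum_of_subset_of_nonneg hTB (fun i _ _ => hw i)
  linarith
end

section
/- For every matroid (U, I) with users as ground set elements, the corresponding winner-pays-bid matroid auction is (1 − 1/e, 1)-smooth with private deviations. -/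
open MeasureTheory

/-!
Fix bids `b` and let `B` be the winning set. Matching elements of an optimal set `A` to
exchange partners in `B` (Hall's theorem, with Hall's condition supplied by augmentation and
fundamental circuits) gives prices `p i ≥ 0` with `∑_{i ∈ A} p i ≤ ∑_{j ∈ B} b j` such that
`i` wins with every bid above `p i`: `p i = b i` if `i ∈ B`, `p i = 0` if `B + i` is
independent, and `p i = b j` for a partner `j ∈ B` with `B - j + i` independent otherwise.
A bidder who wins with every bid above `p` and deviates with density `1 / (v - z)` on
`[0, (1 - 1/e) v]` has expected utility at least the length of `(p, (1 - 1/e) v]`, because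
the utility `v - z` cancels the density. Summing over `A` gives the bound.
-/

namespace FinMatroid

variable {X : Type*} [DecidableEq X] [Fintype X] (M : FinMatroid X)

theorem indep_empty : M.Indep ∅ :=
  let ⟨_, hA⟩ := M.nonempty
  M.downward hA (Finset.empty_subset _)

def toMatroid : Matroid X :=
  (IndepMatroid.ofFinset Set.univ M.Indep M.indep_empty M.downward
    (fun _ _ hI hJ h ↦ by
      obtain ⟨e, he, hi⟩ := M.exchange hI hJ h
      exact ⟨e, (Finset.mem_sdiff.1 he).1, (Finset.mem_sdiff.1 he).2, hi⟩)
    (fun _ _ ↦ Set.subset_univ _)).matroid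

@[simp]
theorem toMatroid_indep_coe {I : Finset X} : M.toMatroid.Indep ↑I ↔ M.Indep I := by
  simp [toMatroid]

variable {M}

theorem exists_indep_insert_erase {B D : Finset X} {x : X} (hB : M.Indep B) (hxB : x ∉ B)
    (hxB_dep : ¬ M.Indep (insert x B)) (hxD : M.Indep (insert x D)) :
    ∃ j ∈ B, j ∉ D ∧ M.Indep (insert x (B.erase j)) := by
  have hB' : M.toMatroid.Indep ↑B := M.toMatroid_indep_coe.2 hB
  have hx_cl : x ∈ M.toMatroid.closure ↑B := by
    rw [hB'.mem_closure_iff_of_notMem (by simpa), Matroid.Dep, ← Finset.coe_insert,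
      toMatroid_indep_coe]
    exact ⟨hxB_dep, fun _ _ ↦ trivial⟩
  have hC := hB'.fundCircuit_isCircuit hx_cl (by simpa)
  obtain ⟨j, hjC, hjD⟩ := Set.not_subset.1 fun h : M.toMatroid.fundCircuit x ↑B ⊆ ↑(insert x D) ↦
    hC.dep.not_indep ((M.toMatroid_indep_coe.2 hxD).subset h)
  have hjx : j ≠ x := by rintro rfl; simp at hjD
  have hjB : j ∈ B := by
    simpa [hjx] using M.toMatroid.fundCircuit_subset_insert x ↑B hjC
  refine ⟨j, hjB, fun h ↦ hjD (by simp [h]), ?_⟩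
  rw [← toMatroid_indep_coe, Finset.coe_insert, Finset.coe_erase,
    Set.insert_sdiff_singleton_comm hjx.symm]
  exact (hB'.mem_fundCircuit_iff hx_cl (by simpa)).1 hjC

theorem exists_injOn_exchange {A B : Finset X} (hA : M.Indep A) (hB : M.Indep B) :
    ∃ f : X → X, Set.InjOn f {i | i ∈ A ∧ (i ∈ B ∨ ¬ M.Indep (insert i B))} ∧
      ∀ i ∈ A, i ∈ B ∨ ¬ M.Indep (insert i B) →
        f i ∈ B ∧ i ∉ B.erase (f i) ∧ M.Indep (insert i (B.erase (f i))) := by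
  classical
  let A' := {i | i ∈ A ∧ (i ∈ B ∨ ¬ M.Indep (insert i B))}
  let partners : A' → Finset X := fun i ↦
    {j ∈ B | i.1 ∉ B.erase j ∧ M.Indep (insert i.1 (B.erase j))}
  -- If fewer than `#s` partners served `s`, augmenting them from `s` would add an `x` that
  -- either lies in `B` (and is its own partner) or has an unused partner by
  -- `exists_indep_insert_erase`.
  have hall : ∀ s : Finset A', s.card ≤ (s.biUnion partners).card := by
    intro s
    by_contra! hlt
    set N := s.biUnion partners
    have hNB : N ⊆ B := Finset.biUnion_subset.2 fun _ _ ↦ Finset.filter_subset _ _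
    have hS : M.Indep (s.map (Function.Embedding.subtype _)) :=
      M.downward hA fun x hx ↦ by
        obtain ⟨i, -, rfl⟩ := Finset.mem_map.1 hx
        exact i.2.1
    obtain ⟨x, hx, hxN⟩ := M.exchange (M.downward hB hNB) hS (by simpa using hlt)
    obtain ⟨hxS, hxN'⟩ := Finset.mem_sdiff.1 hx
    obtain ⟨i, his, rfl⟩ := Finset.mem_map.1 hxS
    obtain ⟨j, hjB, hjN, hj⟩ : ∃ j ∈ B, j ∉ N ∧ (i : X) ∉ B.erase j ∧
        M.Indep (insert (i : X) (B.erase j)) := by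
      by_cases hiB : (i : X) ∈ B
      · exact ⟨i, hiB, hxN', Finset.notMem_erase _ _, by rwa [Finset.insert_erase hiB]⟩
      · obtain ⟨j, hjB, hjN, hj⟩ := exists_indep_insert_erase hB hiB (i.2.2.resolve_left hiB) hxN
        exact ⟨j, hjB, hjN, fun h ↦ hiB (Finset.mem_of_mem_erase h), hj⟩
    exact hjN (Finset.mem_biUnion.2 ⟨i, his, Finset.mem_filter.2 ⟨hjB, hj⟩⟩)
  obtain ⟨g, hg_inj, hg⟩ := (Finset.all_card_le_biUnion_card_iff_exists_injective partners).1 hall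
  refine ⟨fun i ↦ if hi : i ∈ A' then g ⟨i, hi⟩ else i, fun i hi i' hi' h ↦ ?_, fun i hiA hi ↦ ?_⟩
  · dsimp only at h
    rw [dif_pos hi, dif_pos hi'] at h
    exact congrArg Subtype.val (hg_inj h)
  · have hiA' : i ∈ A' := ⟨hiA, hi⟩
    simpa [dif_pos hiA', partners] using hg ⟨i, hiA'⟩

theorem exists_exchange_prices {A B : Finset X} (hA : M.Indep A) (hB : M.Indep B) {b : X → ℝ}
    (hb : ∀ j, 0 ≤ b j) :
    ∃ p : X → ℝ, (∀ i, 0 ≤ p i) ∧ ∑ i ∈ A, p i ≤ ∑ j ∈ B, b j ∧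
      ∀ i ∈ A, ∃ C, M.Indep C ∧ i ∈ C ∧ ∑ j ∈ B, b j ≤ p i + ∑ j ∈ C.erase i, b j := by
  classical
  obtain ⟨f, hf_inj, hf⟩ := exists_injOn_exchange hA hB
  let P : X → Prop := fun i ↦ i ∈ B ∨ ¬ M.Indep (insert i B)
  refine ⟨fun i ↦ if P i then b (f i) else 0, fun i ↦ ite_nonneg (hb _) le_rfl, ?_, fun i hiA ↦ ?_⟩
  · have hinj : Set.InjOn f ↑{i ∈ A | P i} := by simpa only [Finset.coe_filter] using hf_inj
    have himage : {i ∈ A | P i}.image f ⊆ B := fun j hj ↦ by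
      obtain ⟨i, hi, rfl⟩ := Finset.mem_image.1 hj
      exact (hf i (Finset.mem_filter.1 hi).1 (Finset.mem_filter.1 hi).2).1
    calc ∑ i ∈ A, (if P i then b (f i) else 0)
        = ∑ j ∈ {i ∈ A | P i}.image f, b j := by rw [← Finset.sum_filter, Finset.sum_image hinj]
      _ ≤ ∑ j ∈ B, b j := Finset.sum_le_sum_of_subset_of_nonneg himage fun j _ _ ↦ hb j
  · by_cases hi : P i
    · obtain ⟨hfB, hi_erase, hC⟩ := hf i hiA hi
      refine ⟨_, hC, Finset.mem_insert_self _ _, ?_⟩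
      dsimp only
      rw [if_pos hi, Finset.erase_insert hi_erase, Finset.add_sum_erase _ _ hfB]
    · obtain ⟨hiB, hC⟩ := not_or.1 hi
      refine ⟨_, not_not.1 hC, Finset.mem_insert_self _ _, ?_⟩
      dsimp only
      rw [if_neg hi, Finset.erase_insert hiB, zero_add]

end FinMatroid

section SmoothDeviation

open Set

noncomputable def smoothDeviation (v : ℝ) : Measure ℝ :=
  if 0 < v then
    (volume.restrict (Ioc 0 ((1 - (Real.exp 1)⁻¹) * v))).withDensity
      fun z ↦ ENNReal.ofReal (v - z)⁻¹
  else Measure.dirac 0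

variable {v : ℝ}

theorem sub_pos_of_le_one_sub_inv_exp_one_mul (hv : 0 < v) {z : ℝ}
    (hz : z ≤ (1 - (Real.exp 1)⁻¹) * v) : 0 < v - z := by
  have : 0 < (Real.exp 1)⁻¹ * v := by positivity
  linarith

theorem integral_inv_sub_eq_one (hv : 0 < v) :
    ∫ z in (0 : ℝ)..(1 - (Real.exp 1)⁻¹) * v, (v - z)⁻¹ = 1 := by
  have hv' : v - (1 - (Real.exp 1)⁻¹) * v = (Real.exp 1)⁻¹ * v := by ring
  rw [intervalIntegral.integral_comp_sub_left (fun u ↦ u⁻¹) v,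
    integral_inv (notMem_uIcc_of_lt (by rw [hv']; positivity) (by simpa)), hv', sub_zero,
    div_mul_cancel_right₀ hv.ne', inv_inv, Real.log_exp]

instance : IsProbabilityMeasure (smoothDeviation v) := by
  unfold smoothDeviation
  split_ifs with hv
  · have hc : 0 ≤ (1 - (Real.exp 1)⁻¹) * v :=
      mul_nonneg (sub_nonneg.2 (inv_le_one_of_one_le₀ (Real.one_le_exp zero_le_one))) hv.le
    have hcont : ContinuousOn (fun z ↦ (v - z)⁻¹) (Icc 0 ((1 - (Real.exp 1)⁻¹) * v)) :=
      ContinuousOn.inv₀ (by fun_prop) fun z hz ↦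
        (sub_pos_of_le_one_sub_inv_exp_one_mul hv hz.2).ne'
    constructor
    rw [withDensity_apply _ MeasurableSet.univ, Measure.restrict_univ,
      ← ofReal_integral_eq_lintegral_ofReal (hcont.integrableOn_Icc.mono_set Ioc_subset_Icc_self)
        ((ae_restrict_iff' measurableSet_Ioc).2 (.of_forall fun z hz ↦
          inv_nonneg.2 (sub_pos_of_le_one_sub_inv_exp_one_mul hv hz.2).le)),
      ← intervalIntegral.integral_of_le hc, integral_inv_sub_eq_one hv,
      ENNReal.ofReal_one]
  · infer_instance

theorem integral_indicator_smoothDeviation (hv : 0 ≤ v) {S : Set ℝ} (hS : MeasurableSet S) :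
    ∫ z, S.indicator (fun z ↦ v - z) z ∂smoothDeviation v =
      volume.real (S ∩ Ioc 0 ((1 - (Real.exp 1)⁻¹) * v)) := by
  unfold smoothDeviation
  split_ifs with hpos
  · rw [integral_withDensity_eq_integral_toReal_smul (by fun_prop) (by simp),
      ← measureReal_restrict_apply hS, ← integral_indicator_one hS]
    refine setIntegral_congr_fun measurableSet_Ioc fun z hz ↦ ?_
    have hvz := sub_pos_of_le_one_sub_inv_exp_one_mul hpos hz.2
    by_cases hzS : z ∈ S
    · simp [hzS, ENNReal.toReal_ofReal (inv_nonneg.2 hvz.le), hvz.ne']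
    · simp [hzS]
  · obtain rfl : v = 0 := by linarith
    simp

theorem sub_le_measureReal_inter_Ioc {S : Set ℝ} {p c : ℝ} (hp : 0 ≤ p) (hpS : Ioi p ⊆ S) :
    c - p ≤ volume.real (S ∩ Ioc 0 c) :=
  calc c - p
      ≤ volume.real (Ioc p c) := by rw [Real.volume_real_Ioc]; exact le_max_left _ _
    _ ≤ volume.real (S ∩ Ioc 0 c) :=
        measureReal_mono (fun z hz ↦ ⟨hpS hz.1, hp.trans_lt hz.1, hz.2⟩)
          (measure_inter_lt_top_of_right_ne_top measure_Ioc_lt_top.ne).ne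

end SmoothDeviation

section Auction

variable {U : Type*} [DecidableEq U] [Fintype U] {M : FinMatroid U} {sel : (U → ℝ) → Finset U}

theorem mem_sel_update_of_lt (hsel_indep : ∀ b, M.Indep (sel b))
    (hsel_max : ∀ b : U → ℝ, ∀ B, M.Indep B → ∑ i ∈ B, b i ≤ ∑ i ∈ sel b, b i)
    {b : U → ℝ} {i : U} {C : Finset U} (hC : M.Indep C) (hiC : i ∈ C) {z : ℝ}
    (hz : ∑ j ∈ sel b, b j < z + ∑ j ∈ C.erase i, b j) :
    i ∈ sel (Function.update b i z) := by
  by_contra hi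
  have hlose := hsel_max b _ (hsel_indep (Function.update b i z))
  have hC_le := hsel_max (Function.update b i z) C hC
  rw [Finset.sum_update_of_notMem hi] at hC_le
  rw [Finset.sum_update_of_mem hiC, Finset.sdiff_singleton_eq_erase] at hC_le
  linarith

theorem isUpperSet_setOf_mem_sel_update (hsel_indep : ∀ b, M.Indep (sel b))
    (hsel_max : ∀ b : U → ℝ, ∀ B, M.Indep B → ∑ i ∈ B, b i ≤ ∑ i ∈ sel b, b i)
    (b : U → ℝ) (i : U) : IsUpperSet {z | i ∈ sel (Function.update b i z)} := by
  intro z z' hzz' hz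
  rcases hzz'.eq_or_lt with rfl | hlt
  · exact hz
  · rw [Set.mem_ofPred_eq, ← Function.update_idem z z' b]
    refine mem_sel_update_of_lt hsel_indep hsel_max (hsel_indep _) hz ?_
    rw [← Finset.add_sum_erase _ _ hz, Function.update_self]
    linarith

theorem integral_utility_smoothDeviation (hsel_indep : ∀ b, M.Indep (sel b))
    (hsel_max : ∀ b : U → ℝ, ∀ B, M.Indep B → ∑ i ∈ B, b i ≤ ∑ i ∈ sel b, b i)
    (b : U → ℝ) (i : U) {v : ℝ} (hv : 0 ≤ v) :
    ∫ z, (if i ∈ sel (Function.update b i z) then v - z else 0) ∂smoothDeviation v =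
      volume.real
        ({z | i ∈ sel (Function.update b i z)} ∩ Set.Ioc 0 ((1 - (Real.exp 1)⁻¹) * v)) := by
  rw [← integral_indicator_smoothDeviation hv
    (isUpperSet_setOf_mem_sel_update hsel_indep hsel_max b i).ordConnected.measurableSet]
  congr 1 with z
  simp [Set.indicator_apply]

end Auction

theorem matroid_auction_smooth_general {U : Type*} [DecidableEq U] [Fintype U]
    (M : FinMatroid U) (sel : (U → ℝ) → Finset U)
    (hsel_indep : ∀ b, M.Indep (sel b))
    (hsel_max : ∀ b : U → ℝ, ∀ B, M.Indep B → ∑ i ∈ B, b i ≤ ∑ i ∈ sel b, b i)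
    (Astar : (U → ℝ) → Finset U)
    (hAstar_indep : ∀ v, M.Indep (Astar v)) :
    ∃ Dstar : U → ℝ → Measure ℝ,
      (∀ i vi, IsProbabilityMeasure (Dstar i vi)) ∧
      ∀ v b : U → ℝ, (∀ i, 0 ≤ v i) → (∀ i, 0 ≤ b i) →
        (1 - 1 / Real.exp 1) * (∑ i ∈ Astar v, v i)
            - (1 : ℝ) * (∑ i ∈ sel b, b i) ≤
          ∑ i : U, ∫ bs,
            (if i ∈ sel (Function.update b i bs) then v i - bs else 0)
              ∂(Dstar i (v i)) := by
  refine ⟨fun _ ↦ smoothDeviation, fun _ _ ↦ inferInstance, fun v b hv hb ↦ ?_⟩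
  obtain ⟨p, hp_nonneg, hp_sum, hp_win⟩ :=
    FinMatroid.exists_exchange_prices (hAstar_indep v) (hsel_indep b) hb
  have hutil : ∀ i, (if i ∈ Astar v then (1 - (Real.exp 1)⁻¹) * v i - p i else 0) ≤
      ∫ bs, (if i ∈ sel (Function.update b i bs) then v i - bs else 0) ∂smoothDeviation (v i) := by
    intro i
    rw [integral_utility_smoothDeviation hsel_indep hsel_max b i (hv i)]
    split_ifs with hi
    · obtain ⟨C, hC, hiC, hBC⟩ := hp_win i hi
      exact sub_le_measureReal_inter_Ioc (hp_nonneg i) fun z hz ↦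
        mem_sel_update_of_lt hsel_indep hsel_max hC hiC (by linarith [Set.mem_Ioi.1 hz])
    · exact measureReal_nonneg
  calc (1 - 1 / Real.exp 1) * (∑ i ∈ Astar v, v i) - 1 * (∑ i ∈ sel b, b i)
      ≤ ∑ i ∈ Astar v, ((1 - (Real.exp 1)⁻¹) * v i - p i) := by
        rw [Finset.sum_sub_distrib, ← Finset.mul_sum, one_div]
        linarith
    _ = ∑ i, if i ∈ Astar v then (1 - (Real.exp 1)⁻¹) * v i - p i else 0 := by
        rw [Finset.sum_ite_mem, Finset.univ_inter]
    _ ≤ _ := Finset.sum_le_sum fun i _ ↦ hutil i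

/-- The winner-pays-bid matroid auction is `(1 − 1/e, 1)`-smooth with private
deviations: `sel b` is the independent set of winners selected on bid profile `b`
(maximizing the sum of the included bids, ties broken by some consistent rule);
winners pay their bids.  For every nonnegative valuation profile `v` there are bid
distributions `Dstar i (v i)` (depending only on `v i`) such that for every
nonnegative bid profile `b`,
`∑_i E_{b*_i∼Dstar}[u_i(b*_i, b_{−i})] ≥ (1−1/e)·∑_{i ∈ A*(v)} v_i − ∑_i p_i(b)`,
where `A*(v)` is a maximum-weight independent set for weights `v`. -/
theorem matroid_auction_smooth {U : Type*} [DecidableEq U] [Fintype U]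
    (M : FinMatroid U) (sel : (U → ℝ) → Finset U)
    (hsel_indep : ∀ b, M.Indep (sel b))
    (hsel_max : ∀ b : U → ℝ, ∀ B, M.Indep B → ∑ i ∈ B, b i ≤ ∑ i ∈ sel b, b i)
    (Astar : (U → ℝ) → Finset U)
    (hAstar_indep : ∀ v, M.Indep (Astar v))
    (hAstar_max : ∀ v : U → ℝ, ∀ B, M.Indep B → ∑ i ∈ B, v i ≤ ∑ i ∈ Astar v, v i) :
    ∃ Dstar : U → ℝ → Measure ℝ,
      (∀ i vi, IsProbabilityMeasure (Dstar i vi)) ∧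
      ∀ v b : U → ℝ, (∀ i, 0 ≤ v i) → (∀ i, 0 ≤ b i) →
        (1 - 1 / Real.exp 1) * (∑ i ∈ Astar v, v i)
            - (1 : ℝ) * (∑ i ∈ sel b, b i) ≤
          ∑ i : U, ∫ bs,
            (if i ∈ sel (Function.update b i bs) then v i - bs else 0)
              ∂(Dstar i (v i)) :=
  matroid_auction_smooth_general M sel hsel_indep hsel_max Astar hAstar_indep
end

section
/- In the FPA-EQ mechanism, every feasible allocation that maximizes the sum of the included bids yields the same multiset of positive bids among included transactions as the recommended allocation B*; i.e., all bid-sum-maximizing feasible allocations are equivalent. -/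
/-!
The feasible sets `⋃ⱼ Bⱼ` (with `Bⱼ ⊆ Sⱼ`, `#Bⱼ ≤ k`) are, by Hall's theorem, the sets `A` with
`#X ≤ k · #{j | X meets Sⱼ}` for all `X ⊆ A`; since the right-hand side is monotone and
submodular in `X`, these sets are the independent sets of a matroid (Edmonds–Rota).

In a matroid, an independent set `A₁` of maximum weight has, for every upper set `U ∌ 0` of
weights, at least as many elements with weight in `U` as any independent `A₂`: otherwise some
`x ∈ A₂` with `b x ∈ U` can be added to the elements of `A₁` with weight in `U`, and extending
this set inside `A₁ ∪ {x}` to size `#A₁` trades at most one element of weight `< b x` for `x`.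
Two maximum-weight independent sets thus agree on these counts for `U = [v, ∞) ∩ (0, ∞)` and
`U = (v, ∞) ∩ (0, ∞)`, whose difference is the multiplicity of the positive weight `v`.
-/

open Finset

namespace Finset

variable {α : Type*} {f : Finset α → ℕ} {A C T Y : Finset α} {x : α}

def HallCondition (f : Finset α → ℕ) (A : Finset α) : Prop :=
  ∀ X ⊆ A, #X ≤ f X

theorem hallCondition_empty (f : Finset α → ℕ) : HallCondition f ∅ := by
  intro X hX
  simp [subset_empty.1 hX]

theorem HallCondition.mono (hA : HallCondition f A) (hCA : C ⊆ A) : HallCondition f C :=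
  fun X hX => hA X (hX.trans hCA)

theorem sum_lt_of_card_le_one {s : Finset α} {b : α → ℝ} {c : ℝ} (hs : #s ≤ 1)
    (hb : ∀ y ∈ s, b y < c) (hc : 0 < c) : ∑ y ∈ s, b y < c := by
  rcases Nat.le_one_iff_eq_zero_or_eq_one.1 hs with h | h
  · simpa [card_eq_zero.1 h] using hc
  · obtain ⟨y, rfl⟩ := card_eq_one.1 h
    simpa using hb y (mem_singleton_self y)

theorem map_filter_pos_eq_of_forall_card_filter_eq {s t : Finset α} {b : α → ℝ}
    (h : ∀ (U : Set ℝ) [DecidablePred (· ∈ U)], IsUpperSet U → 0 ∉ U →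
      #(s.filter (b · ∈ U)) = #(t.filter (b · ∈ U))) :
    (s.filter (0 < b ·)).val.map b = (t.filter (0 < b ·)).val.map b := by
  have hcount : ∀ (u : Finset α) (v : ℝ), #(u.filter (b · ∈ Set.Ici v ∩ Set.Ioi 0)) =
      ((u.filter (0 < b ·)).val.map b).count v + #(u.filter (b · ∈ Set.Ioi v ∩ Set.Ioi 0)) := by
    intro u v
    classical
    rw [Multiset.count_map, ← filter_val, ← card_def, filter_filter,
      ← card_union_of_disjoint (disjoint_filter.2 fun i _ h h' => by grind), ← filter_or]
    congr 1
    ext i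
    simp only [mem_filter, Set.mem_inter_iff, Set.mem_Ici, Set.mem_Ioi]
    grind
  ext v
  have hs := hcount s v
  have ht := hcount t v
  have h₁ := h _ ((isUpperSet_Ici (a := v)).inter (isUpperSet_Ioi (a := 0))) (by simp)
  have h₂ := h _ ((isUpperSet_Ioi (a := v)).inter (isUpperSet_Ioi (a := 0))) (by simp)
  omega

theorem monotone_card_biUnion {β : Type*} [DecidableEq β] (t : α → Finset β) :
    Monotone fun X : Finset α => #(X.biUnion t) :=
  fun _ _ hXY => card_le_card (biUnion_subset_biUnion_of_subset_left t hXY)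

variable [DecidableEq α]

def Submodular (f : Finset α → ℕ) : Prop :=
  ∀ X Y, f (X ∪ Y) + f (X ∩ Y) ≤ f X + f Y

theorem Submodular.const_mul (hf : Submodular f) (k : ℕ) : Submodular fun X => k * f X := by
  intro X Y
  dsimp only
  simpa only [← mul_add] using Nat.mul_le_mul_left k (hf X Y)

theorem submodular_card_biUnion {β : Type*} [DecidableEq β] (t : α → Finset β) :
    Submodular fun X : Finset α => #(X.biUnion t) := by
  intro X Y
  dsimp only
  rw [union_biUnion, ← card_union_add_card_inter (X.biUnion t) (Y.biUnion t)]
  exact Nat.add_le_add_left (card_le_card (subset_inter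
    (biUnion_subset_biUnion_of_subset_left t inter_subset_left)
    (biUnion_subset_biUnion_of_subset_left t inter_subset_right))) _

theorem HallCondition.union_tight (hsub : Submodular f)
    (hA : HallCondition f A) {T₁ T₂ : Finset α} (h₁ : T₁ ⊆ A)
    (ht₁ : f T₁ ≤ #T₁) (ht₂ : f T₂ ≤ #T₂) : f (T₁ ∪ T₂) ≤ #(T₁ ∪ T₂) := by
  have := hsub T₁ T₂
  have := hA (T₁ ∩ T₂) (inter_subset_left.trans h₁)
  have := card_union_add_card_inter T₁ T₂
  omega

theorem HallCondition.exists_tight_of_not_insert (hmono : Monotone f) (hA : HallCondition f A)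
    (h : ¬HallCondition f (insert x A)) :
    ∃ T ⊆ A, f T ≤ #T ∧ f (insert x T) ≤ f T := by
  obtain ⟨X, hXA, hX⟩ : ∃ X ⊆ insert x A, f X < #X := by
    simpa [HallCondition] using h
  have hxX : x ∈ X := by
    by_contra hxX
    exact (hA X ((subset_insert_iff_of_notMem hxX).1 hXA)).not_gt hX
  have hcard := card_erase_add_one hxX
  have hle := hmono (erase_subset x X)
  have hge := hA (X.erase x) (subset_insert_iff.1 hXA)
  refine ⟨X.erase x, subset_insert_iff.1 hXA, by omega, ?_⟩
  rw [insert_erase hxX]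
  omega

theorem Submodular.apply_insert_le_of_subset (hsub : Submodular f) (hmono : Monotone f)
    (hT : f (insert x T) ≤ f T) (hTY : T ⊆ Y) : f (insert x Y) ≤ f Y := by
  have hfT := hmono (subset_inter (subset_insert x T) hTY)
  have hfY := hsub (insert x T) Y
  rw [insert_union, union_eq_right.2 hTY] at hfY
  omega

theorem Submodular.apply_union_le_of_forall_insert_le (hsub : Submodular f)
    (hmono : Monotone f) (D : Finset α)
    (hD : ∀ x ∈ D, f (insert x T) ≤ f T) : f (T ∪ D) ≤ f T := by
  induction D using Finset.induction_on with
  | empty => simp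
  | insert a D _ ih =>
    rw [union_insert]
    exact (hsub.apply_insert_le_of_subset hmono (hD a (mem_insert_self a D))
      subset_union_left).trans (ih fun x hx => hD x (mem_insert_of_mem hx))

theorem HallCondition.exists_insert (hmono : Monotone f) (hsub : Submodular f)
    (hA : HallCondition f A) (hC : HallCondition f C) (hlt : #A < #C) :
    ∃ x ∈ C, x ∉ A ∧ HallCondition f (insert x A) := by
  by_contra! hbad
  obtain ⟨x₀, hx₀C, hx₀A⟩ := exists_mem_notMem_of_card_lt_card hlt
  set tight := A.powerset.filter fun T => f T ≤ #T
  have htight : tight.Nonempty := by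
    obtain ⟨T, hTA, hT, -⟩ := hA.exists_tight_of_not_insert hmono (hbad x₀ hx₀C hx₀A)
    exact ⟨T, mem_filter.2 ⟨mem_powerset.2 hTA, hT⟩⟩
  obtain ⟨T, hT, hTmax⟩ := tight.exists_max_image card htight
  obtain ⟨hTA, hTtight⟩ := mem_filter.1 hT
  rw [mem_powerset] at hTA
  -- Every `x ∈ C \ A` is spanned by the largest tight subset `T` of `A`, so `f` does not grow
  -- from `T` to `T ∪ (C \ A)`, and `(C ∩ T) ∪ (C \ A)` violates Hall's condition for `C`.
  have hspan : ∀ x ∈ C \ A, f (insert x T) ≤ f T := by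
    intro x hx
    obtain ⟨hxC, hxA⟩ := mem_sdiff.1 hx
    obtain ⟨Tx, hTxA, hTx, hxTx⟩ := hA.exists_tight_of_not_insert hmono (hbad x hxC hxA)
    have hunion : T ∪ Tx = T := (eq_of_subset_of_card_le subset_union_left (hTmax _
      (mem_filter.2 ⟨mem_powerset.2 (union_subset hTA hTxA),
        hA.union_tight hsub hTA hTtight hTx⟩))).symm
    exact hsub.apply_insert_le_of_subset hmono hxTx (hunion ▸ subset_union_right)
  have hdisj : Disjoint (C ∩ T) (C \ A) := disjoint_sdiff.mono_left (inter_subset_right.trans hTA)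
  have hCT := hC ((C ∩ T) ∪ (C \ A)) (union_subset inter_subset_left sdiff_subset)
  rw [card_union_of_disjoint hdisj] at hCT
  have := hmono (union_subset_union (inter_subset_right : C ∩ T ⊆ T) (subset_refl (C \ A)))
  have := hsub.apply_union_le_of_forall_insert_le hmono (C \ A) hspan
  have := inter_comm T C ▸ card_inter_add_card_sdiff T C
  have := card_le_card (sdiff_subset_sdiff hTA (subset_refl C))
  have := card_sdiff_lt_card_sdiff_iff.2 hlt
  omega

end Finset

namespace Matroid

variable {α : Type*} [DecidableEq α]

def ofSubmodular (f : Finset α → ℕ) (hmono : Monotone f) (hsub : Submodular f) : Matroid α :=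
  (IndepMatroid.ofFinset Set.univ (HallCondition f) (hallCondition_empty f)
    (fun _ _ hJ hIJ => hJ.mono hIJ) (fun _ _ hI hJ => hI.exists_insert hmono hsub hJ)
    (fun _ _ => Set.subset_univ _)).matroid

@[simp] theorem ofSubmodular_indep_iff {f : Finset α → ℕ} {hmono : Monotone f}
    {hsub : Submodular f} {A : Finset α} :
    (ofSubmodular f hmono hsub).Indep A ↔ HallCondition f A := by
  simp [ofSubmodular]

variable {M : Matroid α} {I J : Finset α}

theorem Indep.exists_superset_subset_union_card_le (hI : M.Indep I) (hJ : M.Indep J) :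
    ∃ K : Finset α, I ⊆ K ∧ K ⊆ I ∪ J ∧ M.Indep K ∧ #J ≤ #K := by
  obtain ⟨K, hK, hIK⟩ := hI.subset_isBasis_of_subset (Set.subset_union_left (t := (J : Set α)))
  have hKfin : K.Finite := (I ∪ J).finite_toSet.subset (by simpa using hK.subset)
  refine ⟨hKfin.toFinset, by simpa using hIK, by simpa using hK.subset, by simpa using hK.indep, ?_⟩
  have := (hJ.encard_le_eRk_of_subset Set.subset_union_right).trans_eq hK.encard_eq_eRk.symm
  rwa [Set.encard_coe_eq_coe_finsetCard, hKfin.encard_eq_coe_toFinset_card, Nat.cast_le] at this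

theorem card_filter_le_of_forall_sum_le (b : α → ℝ) {A₁ A₂ : Finset α}
    (h₁ : M.Indep A₁) (h₂ : M.Indep A₂)
    (hmax : ∀ C : Finset α, M.Indep C → ∑ i ∈ C, b i ≤ ∑ i ∈ A₁, b i)
    {U : Set ℝ} [DecidablePred (b · ∈ U)] (hU : IsUpperSet U) (h0 : 0 ∉ U) :
    #(A₂.filter (b · ∈ U)) ≤ #(A₁.filter (b · ∈ U)) := by
  by_contra! hlt
  obtain ⟨x, hxA₂, hxF₁, hx⟩ :=
    (h₁.subset (coe_subset.2 (filter_subset _ _))).augment_finset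
      (h₂.subset (coe_subset.2 (filter_subset _ _))) hlt
  obtain ⟨hxA₂, hxU⟩ := mem_filter.1 hxA₂
  have hxA₁ : x ∉ A₁ := fun h => hxF₁ (mem_filter.2 ⟨h, hxU⟩)
  rw [← coe_insert] at hx
  obtain ⟨K, hFK, hKsub, hK, hcard⟩ := hx.exists_superset_subset_union_card_le h₁
  have hxK : x ∈ K := hFK (mem_insert_self x _)
  have hKA₁ : K.erase x ⊆ A₁ := subset_insert_iff.1 <|
    hKsub.trans (union_subset (insert_subset_insert x (filter_subset _ _)) (subset_insert x A₁))
  have hsmall : ∑ y ∈ A₁ \ K.erase x, b y < b x := by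
    refine sum_lt_of_card_le_one ?_ (fun y hy => ?_) (lt_of_not_ge fun h => h0 (hU h hxU))
    · have := card_sdiff_of_subset hKA₁
      have := card_erase_of_mem hxK
      omega
    · obtain ⟨hyA₁, hyK⟩ := mem_sdiff.1 hy
      refine lt_of_not_ge fun h => hyK (mem_erase.2 ⟨?_, hFK (mem_insert_of_mem ?_)⟩)
      · rintro rfl
        exact hxA₁ hyA₁
      · exact mem_filter.2 ⟨hyA₁, hU h hxU⟩
  have := hmax K hK
  rw [← add_sum_erase K b hxK, ← sum_sdiff hKA₁] at this
  linarith

end Matroid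

section Blocks

variable {ι κ : Type*} [DecidableEq ι] [Fintype κ] [DecidableEq κ] {S : κ → Finset ι} {k : ℕ}

def blockRank (S : κ → Finset ι) (k : ℕ) (X : Finset ι) : ℕ :=
  k * #(X.biUnion fun i => {j | i ∈ S j})

theorem hallCondition_biUnion_of_blocks {B : κ → Finset ι} (hB : ∀ j, B j ⊆ S j ∧ #(B j) ≤ k) :
    HallCondition (blockRank S k) (univ.biUnion B) := by
  intro X hX
  rw [blockRank]
  have hcover : X ⊆ (X.biUnion fun i => {j | i ∈ S j}).biUnion fun j => B j ∩ X := by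
    intro i hi
    obtain ⟨j, -, hij⟩ := mem_biUnion.1 (hX hi)
    exact mem_biUnion.2
      ⟨j, mem_biUnion.2 ⟨i, hi, by simpa using (hB j).1 hij⟩, mem_inter.2 ⟨hij, hi⟩⟩
  calc #X ≤ #((X.biUnion fun i => {j | i ∈ S j}).biUnion fun j => B j ∩ X) := card_le_card hcover
    _ ≤ #(X.biUnion fun i => {j | i ∈ S j}) * k :=
      card_biUnion_le_card_mul _ _ _ fun j _ => (card_le_card inter_subset_left).trans (hB j).2
    _ = k * #(X.biUnion fun i => {j | i ∈ S j}) := mul_comm _ _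

theorem HallCondition.exists_blocks {A : Finset ι}
    (h : HallCondition (blockRank S k) A) :
    ∃ B : κ → Finset ι, (∀ j, B j ⊆ S j ∧ #(B j) ≤ k) ∧ univ.biUnion B = A := by
  -- match every element of `A` to one of the `k` slots of a block containing it
  let slots : A → Finset (κ × Fin k) := fun i =>
    ({j | ↑i ∈ S j} : Finset κ) ×ˢ (univ : Finset (Fin k))
  have hall : ∀ s : Finset A, #s ≤ #(s.biUnion slots) := by
    intro s
    have hs : s.biUnion slots =
        ((s.map (Function.Embedding.subtype _)).biUnion fun i => {j | i ∈ S j}) ×ˢ univ := by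
      ext ⟨j, l⟩
      simp [slots]
    rw [hs, card_product, card_univ, Fintype.card_fin, mul_comm]
    simpa [blockRank] using
      h (s.map (Function.Embedding.subtype _)) (by simp +contextual [subset_iff])
  obtain ⟨g, hg, hgslots⟩ := (all_card_le_biUnion_card_iff_exists_injective slots).1 hall
  refine ⟨fun j => (univ.filter fun i : A => (g i).1 = j).map (Function.Embedding.subtype _),
    fun j => ⟨?_, ?_⟩, ?_⟩
  · intro x hx
    obtain ⟨hxA, rfl⟩ : ∃ hxA : x ∈ A, (g ⟨x, hxA⟩).1 = j := by simpa using hx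
    simpa [slots] using hgslots ⟨x, hxA⟩
  · rw [card_map]
    calc _ ≤ #(univ : Finset (Fin k)) :=
          card_le_card_of_injOn (fun i => (g i).2) (fun _ _ => mem_univ _) fun a ha a' ha' h => by
            simp only [coe_filter, mem_univ, true_and, Set.mem_ofPred_eq] at ha ha'
            exact hg (Prod.ext (ha.trans ha'.symm) h)
      _ = k := by simp
  · ext x
    simp

def blockMatroid (S : κ → Finset ι) (k : ℕ) : Matroid ι :=
  Matroid.ofSubmodular (blockRank S k) ((monotone_card_biUnion _).const_mul' k)
    ((submodular_card_biUnion _).const_mul k)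

theorem blockMatroid_indep_iff {A : Finset ι} : (blockMatroid S k).Indep A ↔
    ∃ B : κ → Finset ι, (∀ j, B j ⊆ S j ∧ #(B j) ≤ k) ∧ univ.biUnion B = A :=
  Matroid.ofSubmodular_indep_iff.trans
    ⟨HallCondition.exists_blocks, fun ⟨_, hB, hBA⟩ => hBA ▸ hallCondition_biUnion_of_blocks hB⟩

end Blocks

open scoped Classical in
theorem fpaeq_maximizers_equivalent_general {ι : Type*} [DecidableEq ι]
    {m : ℕ} (b : ι → ℝ) (S : Fin m → Finset ι) (k : ℕ)
    (B₁ B₂ : Fin m → Finset ι)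
    (hfeas₁ : ∀ j, B₁ j ⊆ S j ∧ (B₁ j).card ≤ k)
    (hfeas₂ : ∀ j, B₂ j ⊆ S j ∧ (B₂ j).card ≤ k)
    (hmax₁ : ∀ B : Fin m → Finset ι, (∀ j, B j ⊆ S j ∧ (B j).card ≤ k) →
      ∑ i ∈ Finset.univ.biUnion B, b i ≤ ∑ i ∈ Finset.univ.biUnion B₁, b i)
    (hmax₂ : ∀ B : Fin m → Finset ι, (∀ j, B j ⊆ S j ∧ (B j).card ≤ k) →
      ∑ i ∈ Finset.univ.biUnion B, b i ≤ ∑ i ∈ Finset.univ.biUnion B₂, b i) :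
    (((Finset.univ.biUnion B₁).filter fun i => 0 < b i).val.map b) =
      (((Finset.univ.biUnion B₂).filter fun i => 0 < b i).val.map b) := by
  have hindep : ∀ B : Fin m → Finset ι, (∀ j, B j ⊆ S j ∧ #(B j) ≤ k) →
      (blockMatroid S k).Indep ↑(univ.biUnion B) :=
    fun B hB => blockMatroid_indep_iff.2 ⟨B, hB, rfl⟩
  have hmax : ∀ B₀ : Fin m → Finset ι,
      (∀ B : Fin m → Finset ι, (∀ j, B j ⊆ S j ∧ #(B j) ≤ k) →
        ∑ i ∈ univ.biUnion B, b i ≤ ∑ i ∈ univ.biUnion B₀, b i) →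
      ∀ C : Finset ι, (blockMatroid S k).Indep ↑C → ∑ i ∈ C, b i ≤ ∑ i ∈ univ.biUnion B₀, b i := by
    intro B₀ hB₀ C hC
    obtain ⟨B, hB, rfl⟩ := blockMatroid_indep_iff.1 hC
    exact hB₀ B hB
  refine map_filter_pos_eq_of_forall_card_filter_eq fun U _ hU h0 => le_antisymm ?_ ?_
  · exact Matroid.card_filter_le_of_forall_sum_le b (hindep B₂ hfeas₂) (hindep B₁ hfeas₁)
      (hmax B₂ hmax₂) hU h0
  · exact Matroid.card_filter_le_of_forall_sum_le b (hindep B₁ hfeas₁) (hindep B₂ hfeas₂)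
      (hmax B₁ hmax₁) hU h0

open scoped Classical in
/-- In FPA-EQ, any two feasible allocations that maximize the sum of the included
bids are equivalent: the multisets of positive bids of their included transactions
coincide.  Here an allocation is a tuple of blocks `B_j ⊆ S_j` with `|B_j| ≤ k`. -/
theorem fpaeq_maximizers_equivalent {ι : Type*} [DecidableEq ι] [Fintype ι]
    {m : ℕ} (b : ι → ℝ) (hb : ∀ i, 0 ≤ b i) (S : Fin m → Finset ι) (k : ℕ)
    (B₁ B₂ : Fin m → Finset ι)
    (hfeas₁ : ∀ j, B₁ j ⊆ S j ∧ (B₁ j).card ≤ k)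
    (hfeas₂ : ∀ j, B₂ j ⊆ S j ∧ (B₂ j).card ≤ k)
    (hmax₁ : ∀ B : Fin m → Finset ι, (∀ j, B j ⊆ S j ∧ (B j).card ≤ k) →
      ∑ i ∈ Finset.univ.biUnion B, b i ≤ ∑ i ∈ Finset.univ.biUnion B₁, b i)
    (hmax₂ : ∀ B : Fin m → Finset ι, (∀ j, B j ⊆ S j ∧ (B j).card ≤ k) →
      ∑ i ∈ Finset.univ.biUnion B, b i ≤ ∑ i ∈ Finset.univ.biUnion B₂, b i) :
    (((Finset.univ.biUnion B₁).filter fun i => 0 < b i).val.map b) =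
      (((Finset.univ.biUnion B₂).filter fun i => 0 < b i).val.map b) :=
  fpaeq_maximizers_equivalent_general b S k B₁ B₂ hfeas₁ hfeas₂ hmax₁ hmax₂
end

section
/- There exist a game structure, a valuation distribution, and an inclusion-rule-respecting subgame perfect equilibrium of the FPA-EQ mechanism whose expected welfare is exactly (1 − 1/e) times the expected maximum welfare. Specifically: with three users, one block producer, block size 1, valuations (1, x, x) where x has CDF F(x) = (1/e)·1/(1−x) on [0, 1 − 1/e], the profile where user 1 bids 0, users 2 and 3 bid truthfully, and the block producer includes the highest bid (ties favoring user 1) is an equilibrium with expected welfare 1 − 1/e, while the maximum welfare is 1. -/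
/-!
Write `a = 1/e`. The common value `x` satisfies `P(x ≤ b) = a / (1 - b)` on `[0, 1 - a)`, so
user 1's expected utility `(1 - b) P(x ≤ b)` from a bid `b` equals `a` on the whole support and
is at most `a` beyond it: bidding 0 is a best response. Users 2 and 3 bid their value and cannot
gain by winning at a price at least that value. Since `x ≥ 0`, the welfare is
`E[x] + P(x = 0)`, and by the tail formula
`E[x] = ∫₀^{1-a} (1 - a / (1 - t)) dt = 1 - a + a log a`, giving `1 + a log a = 1 - 1/e`.
-/

open MeasureTheory Real Set

lemma integral_ite_le_const (μ : Measure ℝ) (b r : ℝ) :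
    ∫ x, (if x ≤ b then r else 0) ∂μ = μ.real (Iic b) * r := by
  rw [← smul_eq_mul, ← integral_indicator_const r measurableSet_Iic]
  rfl

lemma integral_one_sub_div_one_sub {a : ℝ} (ha : 0 < a) :
    ∫ t in (0:ℝ)..(1 - a), (1 - a / (1 - t)) = 1 - a + a * log a := by
  have hcont : ContinuousOn (fun t : ℝ => a / (1 - t)) (uIcc 0 (1 - a)) := by
    refine continuousOn_const.div (continuousOn_const.sub continuousOn_id) fun t ht => ?_
    have ht1 : t < 1 := by rcases mem_uIcc.1 ht with h | h <;> linarith [h.2]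
    exact (sub_pos.2 ht1).ne'
  have hlog : ∫ t in (0:ℝ)..(1 - a), a / (1 - t) = -(a * log a) := by
    rw [intervalIntegral.integral_comp_sub_left (fun u => a / u) 1, sub_zero, sub_sub_cancel]
    simp_rw [div_eq_mul_inv]
    rw [intervalIntegral.integral_const_mul, integral_inv_of_pos ha one_pos, one_div, log_inv,
      mul_neg]
  rw [intervalIntegral.integral_sub intervalIntegrable_const hcont.intervalIntegrable, hlog,
    intervalIntegral.integral_const, smul_eq_mul, mul_one, sub_zero, sub_neg_eq_add]

section Support

variable {μ : Measure ℝ} [IsProbabilityMeasure μ] {c : ℝ}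

lemma ae_mem_Icc_of_measure_Icc_eq_one (h : μ (Icc 0 c) = 1) : ∀ᵐ x ∂μ, x ∈ Icc 0 c :=
  (ae_mem_iff_measure_eq measurableSet_Icc.nullMeasurableSet).2 (by rw [h, measure_univ])

lemma measure_Ioi_eq_zero_of_measure_Icc_eq_one (h : μ (Icc 0 c) = 1) {t : ℝ} (ht : c ≤ t) :
    μ (Ioi t) = 0 :=
  measure_mono_null (fun _ hx hx' => (hx' : _ ∈ Icc 0 c).2.not_gt (ht.trans_lt hx))
    ((prob_compl_eq_zero_iff measurableSet_Icc).2 h)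

lemma integrable_id_of_measure_Icc_eq_one (h : μ (Icc 0 c) = 1) :
    Integrable (fun x => x) μ := by
  refine .of_bound measurable_id.aestronglyMeasurable c ?_
  filter_upwards [ae_mem_Icc_of_measure_Icc_eq_one h] with x hx
  rw [norm_of_nonneg hx.1]
  exact hx.2

lemma integral_id_eq_intervalIntegral_measureReal_Ioi (hc : 0 ≤ c) (h : μ (Icc 0 c) = 1) :
    ∫ x, x ∂μ = ∫ t in 0..c, μ.real (Ioi t) := by
  rw [(integrable_id_of_measure_Icc_eq_one h).integral_eq_integral_meas_lt
      ((ae_mem_Icc_of_measure_Icc_eq_one h).mono fun x hx => hx.1),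
    intervalIntegral.integral_of_le hc]
  refine setIntegral_eq_of_subset_of_forall_sdiff_eq_zero measurableSet_Ioi Ioc_subset_Ioi_self
    fun t ht => ?_
  have hct : c ≤ t := not_lt.1 fun htc => ht.2 ⟨ht.1, htc.le⟩
  exact (measureReal_eq_zero_iff).2 (measure_Ioi_eq_zero_of_measure_Icc_eq_one h hct)

lemma integral_ite_pos_self_else_one (h : μ (Icc 0 c) = 1) :
    ∫ x, (if 0 < x then x else 1) ∂μ = ∫ x, x ∂μ + μ.real (Iic 0) := by
  have hsplit : (fun x : ℝ => if 0 < x then x else 1) =ᵐ[μ]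
      fun x => x + (Iic 0).indicator 1 x := by
    filter_upwards [ae_mem_Icc_of_measure_Icc_eq_one h] with x hx
    rcases hx.1.lt_or_eq with hx0 | rfl
    · simp [hx0, hx0.not_ge]
    · simp
  have hatom : Integrable ((Iic 0).indicator (1 : ℝ → ℝ)) μ :=
    (integrable_const 1).indicator measurableSet_Iic
  rw [integral_congr_ae hsplit, integral_add (integrable_id_of_measure_Icc_eq_one h) hatom,
    integral_indicator_one measurableSet_Iic]

end Support

section InverseCDF

variable {μ : Measure ℝ} {a : ℝ}

lemma measureReal_Iic_of_cdf (ha : 0 ≤ a)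
    (hcdf : ∀ y ∈ Ico (0:ℝ) (1 - a), μ (Iic y) = ENNReal.ofReal (a / (1 - y)))
    {y : ℝ} (hy : y ∈ Ico 0 (1 - a)) : μ.real (Iic y) = a / (1 - y) := by
  rw [measureReal_def, hcdf y hy, ENNReal.toReal_ofReal (div_nonneg ha (by linarith [hy.2]))]

lemma measureReal_Ioi_of_cdf [IsProbabilityMeasure μ] (ha : 0 < a)
    (hsupp : μ (Icc 0 (1 - a)) = 1)
    (hcdf : ∀ y ∈ Ico (0:ℝ) (1 - a), μ (Iic y) = ENNReal.ofReal (a / (1 - y)))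
    {t : ℝ} (ht : t ∈ Icc 0 (1 - a)) : μ.real (Ioi t) = 1 - a / (1 - t) := by
  rcases ht.2.lt_or_eq with hlt | rfl
  · rw [← compl_Iic, probReal_compl_eq_one_sub measurableSet_Iic,
      measureReal_Iic_of_cdf ha.le hcdf ⟨ht.1, hlt⟩]
  · rw [(measureReal_eq_zero_iff).2 (measure_Ioi_eq_zero_of_measure_Icc_eq_one hsupp le_rfl),
      sub_sub_cancel, div_self ha.ne', sub_self]

lemma one_sub_mul_measureReal_Iic_le [IsProbabilityMeasure μ] (ha : 0 ≤ a)
    (hcdf : ∀ y ∈ Ico (0:ℝ) (1 - a), μ (Iic y) = ENNReal.ofReal (a / (1 - y)))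
    {b : ℝ} (hb : 0 ≤ b) : (1 - b) * μ.real (Iic b) ≤ a := by
  rcases lt_or_ge b (1 - a) with hlt | hge
  · rw [measureReal_Iic_of_cdf ha hcdf ⟨hb, hlt⟩, mul_div_cancel₀ _ (by linarith)]
  · have h0 : 0 ≤ μ.real (Iic b) := measureReal_nonneg
    have h1 : μ.real (Iic b) ≤ 1 := measureReal_le_one
    nlinarith

lemma integral_ite_pos_self_else_one_of_cdf [IsProbabilityMeasure μ] (ha : 0 < a) (ha1 : a < 1)
    (hsupp : μ (Icc 0 (1 - a)) = 1)
    (hcdf : ∀ y ∈ Ico (0:ℝ) (1 - a), μ (Iic y) = ENNReal.ofReal (a / (1 - y))) :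
    ∫ x, (if 0 < x then x else 1) ∂μ = 1 + a * log a := by
  have hc : 0 ≤ 1 - a := by linarith
  have hatom : μ.real (Iic 0) = a := by
    simpa using measureReal_Iic_of_cdf ha.le hcdf ⟨le_rfl, by linarith⟩
  rw [integral_ite_pos_self_else_one hsupp,
    integral_id_eq_intervalIntegral_measureReal_Ioi hc hsupp,
    intervalIntegral.integral_congr fun t ht => measureReal_Ioi_of_cdf ha hsupp hcdf
      (by rwa [uIcc_of_le hc] at ht),
    integral_one_sub_div_one_sub ha, hatom]
  ring

end InverseCDF

/-- Tightness of the 1 − 1/e bound for FPA-EQ.  With one block producer and block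
size 1, FPA-EQ is a first-price single-item auction.  There are three users: user 1
has value 1; users 2 and 3 share a common random value `x` distributed on
`[0, 1 − 1/e]` with CDF `F(y) = (1/e)/(1 − y)` (an atom of mass `1/e` at 0).
In the profile where user 1 bids 0, users 2 and 3 bid truthfully, and the producer
includes the highest bid breaking ties in favor of user 1 (and then user 2 over
user 3), we have: the maximum welfare is 1; the expected equilibrium welfare is
exactly `1 − 1/e`; and no user can strictly gain by deviating. -/
theorem fpaeq_tightness (μ : Measure ℝ) [IsProbabilityMeasure μ]
    (hsupp : μ (Set.Icc 0 (1 - (Real.exp 1)⁻¹)) = 1)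
    (hcdf : ∀ y ∈ Set.Ico (0:ℝ) (1 - (Real.exp 1)⁻¹),
      μ (Set.Iic y) = ENNReal.ofReal ((Real.exp 1)⁻¹ / (1 - y))) :
    -- the maximum-possible welfare is 1 with probability 1
    (∀ x ∈ Set.Icc (0:ℝ) (1 - (Real.exp 1)⁻¹), max 1 x = 1) ∧
    -- expected welfare at the stated profile: user 1 (value 1) wins exactly when
    -- x = 0, otherwise a user of value x wins; the expectation is 1 − 1/e
    (∫ x, (if 0 < x then x else 1) ∂μ = 1 - (Real.exp 1)⁻¹) ∧
    -- user 1's equilibrium condition: deviating to any bid b₁ ≥ 0 (winning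
    -- whenever x ≤ b₁, by the tie-breaking rule, and paying b₁) yields expected
    -- utility no greater than that of bidding 0
    (∀ b₁ : ℝ, 0 ≤ b₁ →
      ∫ x, (if x ≤ b₁ then 1 - b₁ else 0) ∂μ
        ≤ ∫ x, (if x ≤ 0 then (1:ℝ) else 0) ∂μ) ∧
    -- user 2's equilibrium condition: with value x, bidding b wins iff x ≤ b and
    -- 0 < b; the resulting utility never exceeds its equilibrium utility 0
    (∀ x ∈ Set.Icc (0:ℝ) (1 - (Real.exp 1)⁻¹), ∀ b : ℝ, 0 ≤ b →
      (if x ≤ b ∧ 0 < b then x - b else 0) ≤ 0) ∧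
    -- user 3's equilibrium condition: with value x, bidding b wins iff x < b;
    -- the resulting utility never exceeds its equilibrium utility 0
    (∀ x ∈ Set.Icc (0:ℝ) (1 - (Real.exp 1)⁻¹), ∀ b : ℝ, 0 ≤ b →
      (if x < b then x - b else 0) ≤ 0) := by
  have ha : 0 < (exp 1)⁻¹ := by positivity
  have ha1 : (exp 1)⁻¹ < 1 := inv_lt_one_of_one_lt₀ (one_lt_exp_iff.2 one_pos)
  refine ⟨fun x hx => max_eq_left (by linarith [hx.2]), ?_, fun b hb => ?_, ?_, ?_⟩
  · rw [integral_ite_pos_self_else_one_of_cdf ha ha1 hsupp hcdf, log_inv, log_exp]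
    ring
  · rw [integral_ite_le_const, integral_ite_le_const, mul_one, mul_comm,
      measureReal_Iic_of_cdf ha.le hcdf ⟨le_rfl, by linarith⟩, sub_zero, div_one]
    exact one_sub_mul_measureReal_Iic_le ha.le hcdf hb
  · intro x _ b _
    split_ifs with hwin
    · linarith [hwin.1]
    · exact le_rfl
  · intro x _ b _
    split_ifs with hwin
    · linarith
    · exact le_rfl
end
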